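/- arXiv:1609.08708 — 5 statements merged into one kernel-verified Lean document; each statement's English description precedes it below -/
import Mathlib

section
/- Let μ₂ ∈ ℝ, c₁, c₂ ≥ 0 and γ ∈ [0,1]. Then for all ρ₁, ρ₂ > 0 satisfying c₂/ρ₂ < 1 and 1 − c₂/ρ₂ − γ·c₁/ρ₁ > 0, one has 2μ₂ + c₁ρ₁ + c₂ρ₂ + (c₁/ρ₁)·(1 − c₂/ρ₂)/(1 − c₂/ρ₂ − γ·c₁/ρ₁) ≥ 2μ₂ + 2c₁ + 2c₁c₂√γ + c₁²γ + c₂². -/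
/-- Remark 3.1 (inequality half): the lower bound for λ in condition (3.3), as a
function of (ρ₁, ρ₂) on the feasibility region of condition (3.2), is bounded below
by `2μ₂ + 2c₁ + 2c₁c₂√γ + c₁²γ + c₂²`. -/
theorem stmt_0 (μ₂ c₁ c₂ γ : ℝ) (hc₁ : 0 ≤ c₁) (hc₂ : 0 ≤ c₂)
    (hγ0 : 0 ≤ γ) (hγ1 : γ ≤ 1) :
    ∀ ρ₁ ρ₂ : ℝ, 0 < ρ₁ → 0 < ρ₂ → c₂ / ρ₂ < 1 →
      0 < 1 - c₂ / ρ₂ - γ * c₁ / ρ₁ →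
      2 * μ₂ + 2 * c₁ + 2 * c₁ * c₂ * Real.sqrt γ + c₁ ^ 2 * γ + c₂ ^ 2 ≤
        2 * μ₂ + c₁ * ρ₁ + c₂ * ρ₂ +
          (c₁ / ρ₁) * (1 - c₂ / ρ₂) / (1 - c₂ / ρ₂ - γ * c₁ / ρ₁) := by
  intro ρ₁ ρ₂ hρ₁ hρ₂ h3 h4
  have hs2 : Real.sqrt γ ^ 2 = γ := Real.sq_sqrt hγ0
  have hs0 : 0 ≤ Real.sqrt γ := Real.sqrt_nonneg γ
  set s := Real.sqrt γ with hsdef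
  have ha0 : 0 ≤ c₂ / ρ₂ := div_nonneg hc₂ hρ₂.le
  have hb : 0 < 1 - c₂ / ρ₂ := by linarith
  have hu : 0 < ρ₁ * (1 - c₂ / ρ₂) - γ * c₁ := by
    have h : ρ₁ * (1 - c₂ / ρ₂ - γ * c₁ / ρ₁) = ρ₁ * (1 - c₂ / ρ₂) - γ * c₁ := by
      field_simp
    calc (0:ℝ) < ρ₁ * (1 - c₂ / ρ₂ - γ * c₁ / ρ₁) := mul_pos hρ₁ h4
    _ = _ := h
  set b := 1 - c₂ / ρ₂ with hbdef
  set u := ρ₁ * b - γ * c₁ with hudef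
  have hD : ρ₁ * (1 - c₂ / ρ₂ - γ * c₁ / ρ₁) = u := by
    rw [hudef, hbdef]
    field_simp
  have hterm : (c₁ / ρ₁) * b / (1 - c₂ / ρ₂ - γ * c₁ / ρ₁) = c₁ * b / u := by
    rw [div_mul_eq_mul_div, div_div, hD]
  have hrho : c₁ * ρ₁ = c₁ * u / b + γ * c₁ ^ 2 / b := by
    rw [hudef]
    field_simp
    ring
  have key1 : 2 * c₁ ≤ c₁ * u / b + c₁ * b / u := by
    rw [div_add_div _ _ (ne_of_gt hb) (ne_of_gt hu), le_div_iff₀ (mul_pos hb hu)]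
    nlinarith [mul_nonneg hc₁ (sq_nonneg (u - b))]
  have key2 : 2 * c₁ * c₂ * s + c₁ ^ 2 * γ + c₂ ^ 2 ≤ γ * c₁ ^ 2 / b + c₂ * ρ₂ := by
    rcases eq_or_lt_of_le hc₂ with h|h
    · have hb1' : b = 1 := by rw [hbdef, ← h]; simp
      rw [hb1', ← h]
      simp
      linarith
    · have hc2ρ : c₂ < ρ₂ := by rwa [div_lt_one hρ₂] at h3
      have hid : γ * c₁ ^ 2 / b + c₂ * ρ₂ - (2 * c₁ * c₂ * s + c₁ ^ 2 * γ + c₂ ^ 2)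
          = (s * c₁ * c₂ - c₂ * (ρ₂ - c₂)) ^ 2 / (c₂ * (ρ₂ - c₂)) := by
        rw [← hs2, hbdef]
        have h1 : c₂ ≠ 0 := ne_of_gt h
        have h2 : ρ₂ - c₂ ≠ 0 := ne_of_gt (sub_pos.mpr hc2ρ)
        have h3' : (1:ℝ) - c₂ / ρ₂ ≠ 0 := ne_of_gt hb
        field_simp
        ring
      have hnn : 0 ≤ (s * c₁ * c₂ - c₂ * (ρ₂ - c₂)) ^ 2 / (c₂ * (ρ₂ - c₂)) :=
        div_nonneg (sq_nonneg _) (le_of_lt (mul_pos h (sub_pos.mpr hc2ρ)))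
      linarith
  calc 2 * μ₂ + 2 * c₁ + 2 * c₁ * c₂ * s + c₁ ^ 2 * γ + c₂ ^ 2
      ≤ 2 * μ₂ + (c₁ * u / b + c₁ * b / u) + (γ * c₁ ^ 2 / b + c₂ * ρ₂) := by linarith
    _ = 2 * μ₂ + c₁ * ρ₁ + c₂ * ρ₂ + (c₁ / ρ₁) * b / (1 - c₂ / ρ₂ - γ * c₁ / ρ₁) := by
        rw [hterm, hrho]; ring
end

section
/- Let μ₂ ∈ ℝ, c₁ > 0, c₂ ≥ 0 and γ ∈ (0,1]. Set ρ₁* := c₁γ + c₂√γ + 1 and ρ₂* := c₂ + c₁√γ. Then ρ₁* > 0, ρ₂* > 0, c₂/ρ₂* < 1, 1 − c₂/ρ₂* − γ·c₁/ρ₁* > 0, and 2μ₂ + c₁ρ₁* + c₂ρ₂* + (c₁/ρ₁*)·(1 − c₂/ρ₂*)/(1 − c₂/ρ₂* − γ·c₁/ρ₁*) = 2μ₂ + 2c₁ + 2c₁c₂√γ + c₁²γ + c₂². -/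
/-! Write `s = √γ`, so that `ρ₁* = c₁s² + c₂s + 1` and `ρ₂* = c₂ + c₁s`. Then
`1 - c₂/ρ₂* = c₁s/ρ₂*`, and since `ρ₁* - s ρ₂* = 1` the slack of the feasibility
constraint is `c₁s/(ρ₁*ρ₂*) > 0`. Hence the fractional term of the bound collapses to
`(c₁/ρ₁*)(c₁s/ρ₂*)/(c₁s/(ρ₁*ρ₂*)) = c₁`, and the rest is expanding `c₁ρ₁* + c₂ρ₂*`. -/

namespace CriticalPoint

variable {c₁ c₂ s : ℝ}

lemma one_sub_div_eq (hρ₂ : c₂ + c₁ * s ≠ 0) :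
    1 - c₂ / (c₂ + c₁ * s) = c₁ * s / (c₂ + c₁ * s) := by
  field_simp
  ring

lemma slack_eq (hρ₁ : c₁ * s ^ 2 + c₂ * s + 1 ≠ 0) (hρ₂ : c₂ + c₁ * s ≠ 0) :
    1 - c₂ / (c₂ + c₁ * s) - s ^ 2 * c₁ / (c₁ * s ^ 2 + c₂ * s + 1) =
      c₁ * s / ((c₁ * s ^ 2 + c₂ * s + 1) * (c₂ + c₁ * s)) := by
  rw [one_sub_div_eq hρ₂, div_sub_div _ _ hρ₂ hρ₁,
    mul_comm (c₂ + c₁ * s) (c₁ * s ^ 2 + c₂ * s + 1)]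
  congr 1
  ring

lemma div_mul_div_slack_eq (hc₁ : c₁ ≠ 0) (hs : s ≠ 0)
    (hρ₁ : c₁ * s ^ 2 + c₂ * s + 1 ≠ 0) (hρ₂ : c₂ + c₁ * s ≠ 0) :
    c₁ / (c₁ * s ^ 2 + c₂ * s + 1) * (1 - c₂ / (c₂ + c₁ * s)) /
        (1 - c₂ / (c₂ + c₁ * s) - s ^ 2 * c₁ / (c₁ * s ^ 2 + c₂ * s + 1)) = c₁ := by
  rw [slack_eq hρ₁ hρ₂, one_sub_div_eq hρ₂, div_mul_div_comm,
    div_div_div_cancel_right₀ (mul_ne_zero hρ₁ hρ₂), mul_div_cancel_right₀ _ (mul_ne_zero hc₁ hs)]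

end CriticalPoint

open CriticalPoint in
theorem stmt_1_general (μ₂ c₁ c₂ γ : ℝ) (hc₁ : 0 < c₁) (hc₂ : 0 ≤ c₂)
    (hγ0 : 0 < γ) :
    0 < c₁ * γ + c₂ * Real.sqrt γ + 1 ∧
    0 < c₂ + c₁ * Real.sqrt γ ∧
    c₂ / (c₂ + c₁ * Real.sqrt γ) < 1 ∧
    0 < 1 - c₂ / (c₂ + c₁ * Real.sqrt γ) -
        γ * c₁ / (c₁ * γ + c₂ * Real.sqrt γ + 1) ∧
    2 * μ₂ + c₁ * (c₁ * γ + c₂ * Real.sqrt γ + 1) + c₂ * (c₂ + c₁ * Real.sqrt γ) +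
        (c₁ / (c₁ * γ + c₂ * Real.sqrt γ + 1)) *
          (1 - c₂ / (c₂ + c₁ * Real.sqrt γ)) /
          (1 - c₂ / (c₂ + c₁ * Real.sqrt γ) -
            γ * c₁ / (c₁ * γ + c₂ * Real.sqrt γ + 1)) =
      2 * μ₂ + 2 * c₁ + 2 * c₁ * c₂ * Real.sqrt γ + c₁ ^ 2 * γ + c₂ ^ 2 := by
  obtain ⟨s, hs, rfl⟩ : ∃ s, 0 < s ∧ γ = s ^ 2 :=
    ⟨√γ, Real.sqrt_pos.2 hγ0, (Real.sq_sqrt hγ0.le).symm⟩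
  rw [Real.sqrt_sq hs.le]
  have hρ₁ : 0 < c₁ * s ^ 2 + c₂ * s + 1 := by positivity
  have hρ₂ : 0 < c₂ + c₁ * s := by positivity
  refine ⟨hρ₁, hρ₂, ?_, ?_, ?_⟩
  · rw [div_lt_one hρ₂]
    linarith [mul_pos hc₁ hs]
  · rw [slack_eq hρ₁.ne' hρ₂.ne']
    positivity
  · rw [div_mul_div_slack_eq hc₁.ne' hs.ne' hρ₁.ne' hρ₂.ne']
    ring

/-- Remark 3.1 (attainment half): the global minimum of the lower bound for λ in
condition (3.3) over the feasibility region of condition (3.2) is attained at the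
critical point `ρ₁* = c₁γ + c₂√γ + 1`, `ρ₂* = c₂ + c₁√γ`, which is feasible. -/
theorem stmt_1 (μ₂ c₁ c₂ γ : ℝ) (hc₁ : 0 < c₁) (hc₂ : 0 ≤ c₂)
    (hγ0 : 0 < γ) (hγ1 : γ ≤ 1) :
    0 < c₁ * γ + c₂ * Real.sqrt γ + 1 ∧
    0 < c₂ + c₁ * Real.sqrt γ ∧
    c₂ / (c₂ + c₁ * Real.sqrt γ) < 1 ∧
    0 < 1 - c₂ / (c₂ + c₁ * Real.sqrt γ) -
        γ * c₁ / (c₁ * γ + c₂ * Real.sqrt γ + 1) ∧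
    2 * μ₂ + c₁ * (c₁ * γ + c₂ * Real.sqrt γ + 1) + c₂ * (c₂ + c₁ * Real.sqrt γ) +
        (c₁ / (c₁ * γ + c₂ * Real.sqrt γ + 1)) *
          (1 - c₂ / (c₂ + c₁ * Real.sqrt γ)) /
          (1 - c₂ / (c₂ + c₁ * Real.sqrt γ) -
            γ * c₁ / (c₁ * γ + c₂ * Real.sqrt γ + 1)) =
      2 * μ₂ + 2 * c₁ + 2 * c₁ * c₂ * Real.sqrt γ + c₁ ^ 2 * γ + c₂ ^ 2 :=
  stmt_1_general μ₂ c₁ c₂ γ hc₁ hc₂ hγ0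
end

section
/- Fix real constants μ₁, μ₂, λ and nonnegative constants c₁, c₂, k₁, k₂, k₃, k₄, k₅, and positive constants ε₁, ε₂, ρ₁, ρ₂. Set M := max(k₁/ε₁ + k₄, k₂/ε₂ + k₅), assume M > 0, and set γ := (k₂/ε₂ + k₅)/M. Assume condition (3.2): c₂/ρ₂ < 1 and 1 − c₂/ρ₂ − γ·c₁/ρ₁ > 0; and condition (3.3): 2μ₂ + c₁ρ₁ + c₂ρ₂ + (c₁/ρ₁)(1 − c₂/ρ₂)/(1 − c₂/ρ₂ − γ·c₁/ρ₁) < λ < −2μ₁ − k₃ − k₁ε₁ − k₂ε₂ − M. Define λ̄₁ := −λ − 2μ₁ − k₃ − k₁ε₁ − k₂ε₂ and λ̄₂ := λ − 2μ₂ − c₁ρ₁ − c₂ρ₂. Then: λ̄₁ > 0, λ̄₂ > 0, (c₁/ρ₁)·(1/λ̄₂ + γ/(1 − c₂/ρ₂)) < 1, and M/λ̄₁ < 1. -/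
/-- The two key strict inequalities at the end of the proof of Theorem 3.1, making
the map Γ₂ a contraction, follow from conditions (3.2) and (3.3) of Hypothesis 3.1. -/
theorem stmt_3 (μ₁ μ₂ lam c₁ c₂ k₁ k₂ k₃ k₄ k₅ ε₁ ε₂ ρ₁ ρ₂ M γ lb₁ lb₂ : ℝ)
    (hc₁ : 0 ≤ c₁) (hc₂ : 0 ≤ c₂)
    (hk₁ : 0 ≤ k₁) (hk₂ : 0 ≤ k₂) (hk₃ : 0 ≤ k₃) (hk₄ : 0 ≤ k₄) (hk₅ : 0 ≤ k₅)
    (hε₁ : 0 < ε₁) (hε₂ : 0 < ε₂) (hρ₁ : 0 < ρ₁) (hρ₂ : 0 < ρ₂)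
    (hM : M = max (k₁ / ε₁ + k₄) (k₂ / ε₂ + k₅)) (hMpos : 0 < M)
    (hγ : γ = (k₂ / ε₂ + k₅) / M)
    (h32a : c₂ / ρ₂ < 1) (h32b : 0 < 1 - c₂ / ρ₂ - γ * c₁ / ρ₁)
    (h33l : 2 * μ₂ + c₁ * ρ₁ + c₂ * ρ₂ +
        (c₁ / ρ₁) * (1 - c₂ / ρ₂) / (1 - c₂ / ρ₂ - γ * c₁ / ρ₁) < lam)
    (h33r : lam < -2 * μ₁ - k₃ - k₁ * ε₁ - k₂ * ε₂ - M)
    (hlb₁ : lb₁ = -lam - 2 * μ₁ - k₃ - k₁ * ε₁ - k₂ * ε₂)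
    (hlb₂ : lb₂ = lam - 2 * μ₂ - c₁ * ρ₁ - c₂ * ρ₂) :
    0 < lb₁ ∧ 0 < lb₂ ∧
    (c₁ / ρ₁) * (1 / lb₂ + γ / (1 - c₂ / ρ₂)) < 1 ∧
    M / lb₁ < 1 := by
  have hγ0 : 0 ≤ γ := by
    rw [hγ]
    exact div_nonneg (by positivity) hMpos.le
  have hb : 0 < 1 - c₂ / ρ₂ := by linarith
  have hlb1 : M < lb₁ := by rw [hlb₁]; linarith
  have hlb1pos : 0 < lb₁ := lt_trans hMpos hlb1
  have h4 : M / lb₁ < 1 := (div_lt_one hlb1pos).mpr hlb1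
  have ha : 0 ≤ c₁ / ρ₁ := div_nonneg hc₁ hρ₁.le
  have hlb2 : (c₁ / ρ₁) * (1 - c₂ / ρ₂) / (1 - c₂ / ρ₂ - γ * c₁ / ρ₁) < lb₂ := by
    rw [hlb₂]; linarith
  have hlb2pos : 0 < lb₂ :=
    lt_of_le_of_lt (div_nonneg (mul_nonneg ha hb.le) h32b.le) hlb2
  refine ⟨hlb1pos, hlb2pos, ?_, h4⟩
  rcases eq_or_lt_of_le ha with h0 | hapos
  · rw [← h0, zero_mul]; exact zero_lt_one
  · have hab : (c₁ / ρ₁) * (1 - c₂ / ρ₂) < lb₂ * (1 - c₂ / ρ₂ - γ * c₁ / ρ₁) :=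
      (div_lt_iff₀ h32b).mp hlb2
    have h1 : (c₁ / ρ₁) / lb₂ < (1 - c₂ / ρ₂ - γ * c₁ / ρ₁) / (1 - c₂ / ρ₂) :=
      (div_lt_div_iff₀ hlb2pos hb).mpr (by nlinarith)
    have hsum : (1 - c₂ / ρ₂ - γ * c₁ / ρ₁) / (1 - c₂ / ρ₂) +
        (c₁ / ρ₁) * (γ / (1 - c₂ / ρ₂)) = 1 := by
      have hbne : (1 - c₂ / ρ₂) ≠ 0 := ne_of_gt hb
      have h : (1 - c₂ / ρ₂ - γ * c₁ / ρ₁) / (1 - c₂ / ρ₂) +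
          (c₁ / ρ₁) * (γ / (1 - c₂ / ρ₂)) = (1 - c₂ / ρ₂) / (1 - c₂ / ρ₂) := by ring
      rw [h, div_self hbne]
    have hexp : (c₁ / ρ₁) * (1 / lb₂ + γ / (1 - c₂ / ρ₂)) =
        (c₁ / ρ₁) / lb₂ + (c₁ / ρ₁) * (γ / (1 - c₂ / ρ₂)) := by ring
    rw [hexp]
    linarith
end

section
/- Fix real constants μ₁, μ₂, λ and nonnegative constants c₁, c₂, k₁, k₂, k₃, k₄, k₅, and positive constants ε₁, ε₂, ρ₁, ρ₂. Set M := max(k₁/ε₁ + k₄, k₂/ε₂ + k₅), assume M > 0, and set γ := (k₂/ε₂ + k₅)/M. Assume condition (3.2): c₂/ρ₂ < 1 and 1 − c₂/ρ₂ − γ·c₁/ρ₁ > 0; and condition (3.3): 2μ₂ + c₁ρ₁ + c₂ρ₂ + (c₁/ρ₁)(1 − c₂/ρ₂)/(1 − c₂/ρ₂ − γ·c₁/ρ₁) < λ < −2μ₁ − k₃ − k₁ε₁ − k₂ε₂ − M. Define λ̄₁ := −λ − 2μ₁ − k₃ − k₁ε₁ − k₂ε₂ and λ̄₂ := λ − 2μ₂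 − c₁ρ₁ − c₂ρ₂. Suppose nonnegative real numbers a, b, c, ā, b̄, c̄ satisfy: a ≤ (1/λ̄₁)·((k₁/ε₁ + k₄)·b̄ + (k₂/ε₂ + k₅)·c̄), b ≤ (c₁/ρ₁)·a/λ̄₂, and c ≤ (c₁/ρ₁)·a/(1 − c₂/ρ₂). Then b + γ·c ≤ K·(b̄ + γ·c̄), where K := (c₁/ρ₁)·(M/λ̄₁)·(1/λ̄₂ + γ/(1 − c₂/ρ₂)), and moreover K < 1. -/
/-!
The factor `K` splits as `(M / λ̄₁) · (c₁/ρ₁)(1/λ̄₂ + γ/(1 - c₂/ρ₂))`. The right half of (3.3)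
says exactly `M < λ̄₁`, so the first factor is below one. Writing `r = c₁/ρ₁`, `s = 1 - c₂/ρ₂`,
the left half of (3.3) says `r s / (s - γ r) < λ̄₂`, i.e. `r / λ̄₂ < (s - γ r) / s`; adding
`γ r / s` shows the second factor is below one as well.
-/

lemma mul_add_mul_le_max_mul {p q x : ℝ} (y : ℝ) (hx : 0 ≤ x) (hpq : 0 < max p q) :
    p * x + q * y ≤ max p q * (x + q / max p q * y) := by
  have hq : max p q * (q / max p q * y) = q * y := by
    rw [← mul_assoc, mul_div_cancel₀ _ hpq.ne']
  rw [mul_add, hq]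
  gcongr
  exact le_max_left p q

lemma add_mul_le_mul_of_le_div {r l s γ a b c : ℝ} (hγ : 0 ≤ γ)
    (hb : b ≤ r * a / l) (hc : c ≤ r * a / s) :
    b + γ * c ≤ r * (1 / l + γ / s) * a := by
  calc b + γ * c ≤ r * a / l + γ * (r * a / s) := add_le_add hb (mul_le_mul_of_nonneg_left hc hγ)
    _ = r * (1 / l + γ / s) * a := by ring

lemma mul_one_div_add_div_mem_Ico {r s γ l : ℝ} (hr : 0 ≤ r) (hs : 0 < s)
    (hsγ : 0 < s - γ * r) (hγ : 0 ≤ γ) (hl : r * s / (s - γ * r) < l) :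
    r * (1 / l + γ / s) ∈ Set.Ico 0 1 := by
  have hl₀ : 0 < l := lt_of_le_of_lt (by positivity) hl
  have hrl : r / l < (s - γ * r) / s := by
    rw [div_lt_div_iff₀ hl₀ hs, mul_comm _ l]
    rwa [div_lt_iff₀ hsγ] at hl
  refine ⟨by positivity, ?_⟩
  calc r * (1 / l + γ / s) = r / l + γ * r / s := by ring
    _ < (s - γ * r) / s + γ * r / s := by gcongr
    _ = 1 := by rw [← add_div, sub_add_cancel, div_self hs.ne']

theorem stmt_4_general (μ₁ μ₂ lam c₁ c₂ k₁ k₂ k₃ k₄ k₅ ε₁ ε₂ ρ₁ ρ₂ M γ lb₁ lb₂ : ℝ)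
    (hc₁ : 0 ≤ c₁)
    (hk₂ : 0 ≤ k₂) (hk₅ : 0 ≤ k₅)
    (hε₂ : 0 < ε₂) (hρ₁ : 0 < ρ₁)
    (hM : M = max (k₁ / ε₁ + k₄) (k₂ / ε₂ + k₅)) (hMpos : 0 < M)
    (hγ : γ = (k₂ / ε₂ + k₅) / M)
    (h32a : c₂ / ρ₂ < 1) (h32b : 0 < 1 - c₂ / ρ₂ - γ * c₁ / ρ₁)
    (h33l : 2 * μ₂ + c₁ * ρ₁ + c₂ * ρ₂ +
        (c₁ / ρ₁) * (1 - c₂ / ρ₂) / (1 - c₂ / ρ₂ - γ * c₁ / ρ₁) < lam)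
    (h33r : lam < -2 * μ₁ - k₃ - k₁ * ε₁ - k₂ * ε₂ - M)
    (hlb₁ : lb₁ = -lam - 2 * μ₁ - k₃ - k₁ * ε₁ - k₂ * ε₂)
    (hlb₂ : lb₂ = lam - 2 * μ₂ - c₁ * ρ₁ - c₂ * ρ₂)
    (a b c bbar cbar : ℝ)
    (hbbar : 0 ≤ bbar)
    (hIa : a ≤ (1 / lb₁) * ((k₁ / ε₁ + k₄) * bbar + (k₂ / ε₂ + k₅) * cbar))
    (hIb : b ≤ (c₁ / ρ₁) * a / lb₂)
    (hIc : c ≤ (c₁ / ρ₁) * a / (1 - c₂ / ρ₂)) :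
    b + γ * c ≤
      (c₁ / ρ₁) * (M / lb₁) * (1 / lb₂ + γ / (1 - c₂ / ρ₂)) * (bbar + γ * cbar) ∧
    (c₁ / ρ₁) * (M / lb₁) * (1 / lb₂ + γ / (1 - c₂ / ρ₂)) < 1 := by
  have hlb₁M : M < lb₁ := by linarith
  have hlb₁0 : 0 < lb₁ := hMpos.trans hlb₁M
  have hγ0 : 0 ≤ γ := by rw [hγ]; positivity
  rw [mul_div_assoc γ c₁ ρ₁] at h32b h33l
  obtain ⟨hE0, hE⟩ : (c₁ / ρ₁) * (1 / lb₂ + γ / (1 - c₂ / ρ₂)) ∈ Set.Ico 0 1 :=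
    mul_one_div_add_div_mem_Ico (by positivity) (by linarith) h32b hγ0 (by linarith)
  have ha : a ≤ (M / lb₁) * (bbar + γ * cbar) := by
    have hmax := mul_add_mul_le_max_mul cbar hbbar (hM ▸ hMpos)
    rw [← hM, ← hγ] at hmax
    calc a ≤ (1 / lb₁) * ((k₁ / ε₁ + k₄) * bbar + (k₂ / ε₂ + k₅) * cbar) := hIa
      _ ≤ (1 / lb₁) * (M * (bbar + γ * cbar)) := by gcongr
      _ = (M / lb₁) * (bbar + γ * cbar) := by ring
  constructor
  · calc b + γ * c ≤ (c₁ / ρ₁) * (1 / lb₂ + γ / (1 - c₂ / ρ₂)) * a :=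
          add_mul_le_mul_of_le_div hγ0 hIb hIc
      _ ≤ (c₁ / ρ₁) * (1 / lb₂ + γ / (1 - c₂ / ρ₂)) * ((M / lb₁) * (bbar + γ * cbar)) := by
          gcongr
      _ = _ := by ring
  · calc (c₁ / ρ₁) * (M / lb₁) * (1 / lb₂ + γ / (1 - c₂ / ρ₂))
          = (M / lb₁) * ((c₁ / ρ₁) * (1 / lb₂ + γ / (1 - c₂ / ρ₂))) := by ring
      _ < 1 := mul_lt_one_of_nonneg_of_lt_one_left (by positivity)
          ((div_lt_one hlb₁0).2 hlb₁M) hE.le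

/-- The core contraction estimate in the proof of Theorem 3.1: combining the three
inequalities (3.8) yields `b + γc ≤ K(b̄ + γc̄)` with contraction factor `K < 1`. -/
theorem stmt_4 (μ₁ μ₂ lam c₁ c₂ k₁ k₂ k₃ k₄ k₅ ε₁ ε₂ ρ₁ ρ₂ M γ lb₁ lb₂ : ℝ)
    (hc₁ : 0 ≤ c₁) (hc₂ : 0 ≤ c₂)
    (hk₁ : 0 ≤ k₁) (hk₂ : 0 ≤ k₂) (hk₃ : 0 ≤ k₃) (hk₄ : 0 ≤ k₄) (hk₅ : 0 ≤ k₅)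
    (hε₁ : 0 < ε₁) (hε₂ : 0 < ε₂) (hρ₁ : 0 < ρ₁) (hρ₂ : 0 < ρ₂)
    (hM : M = max (k₁ / ε₁ + k₄) (k₂ / ε₂ + k₅)) (hMpos : 0 < M)
    (hγ : γ = (k₂ / ε₂ + k₅) / M)
    (h32a : c₂ / ρ₂ < 1) (h32b : 0 < 1 - c₂ / ρ₂ - γ * c₁ / ρ₁)
    (h33l : 2 * μ₂ + c₁ * ρ₁ + c₂ * ρ₂ +
        (c₁ / ρ₁) * (1 - c₂ / ρ₂) / (1 - c₂ / ρ₂ - γ * c₁ / ρ₁) < lam)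
    (h33r : lam < -2 * μ₁ - k₃ - k₁ * ε₁ - k₂ * ε₂ - M)
    (hlb₁ : lb₁ = -lam - 2 * μ₁ - k₃ - k₁ * ε₁ - k₂ * ε₂)
    (hlb₂ : lb₂ = lam - 2 * μ₂ - c₁ * ρ₁ - c₂ * ρ₂)
    (a b c abar bbar cbar : ℝ)
    (ha0 : 0 ≤ a) (hb0 : 0 ≤ b) (hc0 : 0 ≤ c)
    (habar : 0 ≤ abar) (hbbar : 0 ≤ bbar) (hcbar : 0 ≤ cbar)
    (hIa : a ≤ (1 / lb₁) * ((k₁ / ε₁ + k₄) * bbar + (k₂ / ε₂ + k₅) * cbar))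
    (hIb : b ≤ (c₁ / ρ₁) * a / lb₂)
    (hIc : c ≤ (c₁ / ρ₁) * a / (1 - c₂ / ρ₂)) :
    b + γ * c ≤
      (c₁ / ρ₁) * (M / lb₁) * (1 / lb₂ + γ / (1 - c₂ / ρ₂)) * (bbar + γ * cbar) ∧
    (c₁ / ρ₁) * (M / lb₁) * (1 / lb₂ + γ / (1 - c₂ / ρ₂)) < 1 :=
  stmt_4_general μ₁ μ₂ lam c₁ c₂ k₁ k₂ k₃ k₄ k₅ ε₁ ε₂ ρ₁ ρ₂ M γ lb₁ lb₂ hc₁ hk₂ hk₅ hε₂ hρ₁ hM hMpos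
    hγ h32a h32b h33l h33r hlb₁ hlb₂ a b c bbar cbar hbbar hIa hIb hIc
end

section
/- Fix real constants μ₁, μ₂, λ and nonnegative constants c₁, c₂, k₁, k₂, k₃, k₄, and positive constants ε₁, ε₂, ρ₁, ρ₂, and set k₅ := 0. Assume k₁/ε₁ + k₄ > 0. Set M := max(k₁/ε₁ + k₄, k₂/ε₂) and γ := (k₂/ε₂)/M. Assume condition (3.2): c₂/ρ₂ < 1 and 1 − c₂/ρ₂ − γ·c₁/ρ₁ > 0; and condition (3.3): 2μ₂ + c₁ρ₁ + c₂ρ₂ + (c₁/ρ₁)(1 − c₂/ρ₂)/(1 − c₂/ρ₂ − γ·c₁/ρ₁) < λ < −2μ₁ − k₃ − k₁ε₁ − k₂ε₂ − M. Define λ̄₁ := −λ − 2μ₁ − k₃ − k₁ε₁ − k₂ε₂ and λ̄₂ := λ − 2μ₂ − c₁ρ₁ − c₂ρ₂. Suppose nonnegative real numbers a, ā, b, c satisfy: a ≤ (1/λ̄₁)·((k₁/ε₁ + k₄)·b + (k₂/ε₂)·c), b ≤ (c₁/ρ₁)·ā/λ̄₂, and c ≤ (c₁/ρ₁)·ā/(1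 − c₂/ρ₂). Then a ≤ K′·ā, where K′ := (c₁/ρ₁)·((k₁/ε₁ + k₄)/λ̄₁)·(1/λ̄₂ + (k₂/ε₂)/((k₁/ε₁ + k₄)(1 − c₂/ρ₂))), and moreover K′ < 1. -/
set_option maxHeartbeats 1000000 in
/-- The contraction estimate of Remark 3.3 (the case k₅ = 0): combining the
inequalities (3.12) shows the map Γ₁ is a contraction with factor `K′ < 1`. -/
theorem stmt_5 (μ₁ μ₂ lam c₁ c₂ k₁ k₂ k₃ k₄ ε₁ ε₂ ρ₁ ρ₂ M γ lb₁ lb₂ : ℝ)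
    (hc₁ : 0 ≤ c₁) (hc₂ : 0 ≤ c₂)
    (hk₁ : 0 ≤ k₁) (hk₂ : 0 ≤ k₂) (hk₃ : 0 ≤ k₃) (hk₄ : 0 ≤ k₄)
    (hε₁ : 0 < ε₁) (hε₂ : 0 < ε₂) (hρ₁ : 0 < ρ₁) (hρ₂ : 0 < ρ₂)
    (hpos : 0 < k₁ / ε₁ + k₄)
    (hM : M = max (k₁ / ε₁ + k₄) (k₂ / ε₂))
    (hγ : γ = (k₂ / ε₂) / M)
    (h32a : c₂ / ρ₂ < 1) (h32b : 0 < 1 - c₂ / ρ₂ - γ * c₁ / ρ₁)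
    (h33l : 2 * μ₂ + c₁ * ρ₁ + c₂ * ρ₂ +
        (c₁ / ρ₁) * (1 - c₂ / ρ₂) / (1 - c₂ / ρ₂ - γ * c₁ / ρ₁) < lam)
    (h33r : lam < -2 * μ₁ - k₃ - k₁ * ε₁ - k₂ * ε₂ - M)
    (hlb₁ : lb₁ = -lam - 2 * μ₁ - k₃ - k₁ * ε₁ - k₂ * ε₂)
    (hlb₂ : lb₂ = lam - 2 * μ₂ - c₁ * ρ₁ - c₂ * ρ₂)
    (a abar b c : ℝ)
    (ha0 : 0 ≤ a) (habar : 0 ≤ abar) (hb0 : 0 ≤ b) (hc0 : 0 ≤ c)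
    (hIa : a ≤ (1 / lb₁) * ((k₁ / ε₁ + k₄) * b + (k₂ / ε₂) * c))
    (hIb : b ≤ (c₁ / ρ₁) * abar / lb₂)
    (hIc : c ≤ (c₁ / ρ₁) * abar / (1 - c₂ / ρ₂)) :
    a ≤ (c₁ / ρ₁) * ((k₁ / ε₁ + k₄) / lb₁) *
          (1 / lb₂ + (k₂ / ε₂) / ((k₁ / ε₁ + k₄) * (1 - c₂ / ρ₂))) * abar ∧
    (c₁ / ρ₁) * ((k₁ / ε₁ + k₄) / lb₁) *
        (1 / lb₂ + (k₂ / ε₂) / ((k₁ / ε₁ + k₄) * (1 - c₂ / ρ₂))) < 1 := by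
  set S := k₁ / ε₁ + k₄ with hSdef
  set T := k₂ / ε₂ with hTdef
  set q := c₁ / ρ₁ with hqdef
  set p := 1 - c₂ / ρ₂ with hpdef
  have hS : 0 < S := hpos
  have hT : 0 ≤ T := div_nonneg hk₂ hε₂.le
  have hq : 0 ≤ q := div_nonneg hc₁ hρ₁.le
  have hp : 0 < p := by rw [hpdef]; linarith
  have hM0 : 0 < M := by rw [hM]; exact lt_of_lt_of_le hS (le_max_left _ _)
  have hMS : S ≤ M := by rw [hM]; exact le_max_left _ _
  have hγq : γ * q < p := by
    have h := h32b
    rw [mul_div_assoc] at h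
    rw [hqdef]; linarith
  have hD : 0 < p - γ * q := by linarith
  have hγM : γ * M = T := by rw [hγ]; field_simp
  have hlb₁M : M < lb₁ := by rw [hlb₁]; linarith
  have hlb₁0 : 0 < lb₁ := lt_trans hM0 hlb₁M
  have hlb₂gt : q * p / (p - γ * q) < lb₂ := by
    have h := h33l
    rw [mul_div_assoc γ c₁ ρ₁] at h
    rw [hlb₂, hqdef]; linarith
  have hlb₂0 : 0 < lb₂ :=
    lt_of_le_of_lt (div_nonneg (mul_nonneg hq hp.le) hD.le) hlb₂gt
  have hA : q * p < lb₂ * (p - γ * q) := (div_lt_iff₀ hD).mp hlb₂gt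
  have hB : M * (q * p) < M * (lb₂ * (p - γ * q)) := by
    exact mul_lt_mul_of_pos_left hA hM0
  have hC2 : M * (lb₂ * (p - γ * q)) = M * lb₂ * p - T * (q * lb₂) := by
    rw [← hγM]; ring
  have hDq : S * (q * p) ≤ M * (q * p) :=
    mul_le_mul_of_nonneg_right hMS (mul_nonneg hq hp.le)
  have h1 : q * S * p + q * T * lb₂ < M * (lb₂ * p) := by nlinarith
  have hkey : q * S / lb₂ + q * T / p < M := by
    rw [div_add_div _ _ hlb₂0.ne' hp.ne', div_lt_iff₀ (mul_pos hlb₂0 hp)]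
    linarith [h1]
  have hSne := hS.ne'
  have hpne := hp.ne'
  have hlb₁ne := hlb₁0.ne'
  have hlb₂ne := hlb₂0.ne'
  have hKeq : q * (S / lb₁) * (1 / lb₂ + T / (S * p)) =
      (q * S / lb₂ + q * T / p) / lb₁ := by
    field_simp
  constructor
  · have step1 : S * b ≤ S * (q * abar / lb₂) :=
      mul_le_mul_of_nonneg_left hIb hS.le
    have step2 : T * c ≤ T * (q * abar / p) :=
      mul_le_mul_of_nonneg_left hIc hT
    have hinv : (0:ℝ) ≤ 1 / lb₁ := by positivity
    have step3 : a ≤ (1 / lb₁) * (S * (q * abar / lb₂) + T * (q * abar / p)) := by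
      calc a ≤ (1 / lb₁) * (S * b + T * c) := hIa
        _ ≤ (1 / lb₁) * (S * (q * abar / lb₂) + T * (q * abar / p)) := by
            apply mul_le_mul_of_nonneg_left _ hinv
            linarith
    have heq : (1 / lb₁) * (S * (q * abar / lb₂) + T * (q * abar / p)) =
        q * (S / lb₁) * (1 / lb₂ + T / (S * p)) * abar := by
      field_simp
    linarith [heq ▸ step3]
  · rw [hKeq, div_lt_one hlb₁0]
    linarith
end
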